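/- arXiv:2303.15717 — 3 statements merged into one kernel-verified Lean document; each statement's English description precedes it below -/
import Mathlib

section
/- Let X be a complex Banach space and L(X) the Banach algebra of bounded linear operators on X. For A ∈ L(X) the following are equivalent: (1) A has a Hirano inverse, i.e. there exists Z ∈ L(X) with AZ = ZA, Z = ZAZ and A² − AZ nilpotent; (2) A − A³ is nilpotent; (3) A = E + N where E³ = E, N is nilpotent and EN = NE; (4) A² has a strongly Drazin inverse, i.e. there exists W with A²W = WA², W = WA²W and A² − A²W nilpotent. -/
/-- `a` has a Hirano inverse: there exists `z` with `az = za`, `z = zaz`,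
and `a^2 - az` nilpotent. -/
def HasHiranoInverse {R : Type*} [Ring R] (a : R) : Prop :=
  ∃ z : R, a * z = z * a ∧ z = z * a * z ∧ IsNilpotent (a ^ 2 - a * z)

/-- `a` has a strongly Drazin inverse: there exists `z` with `az = za`, `z = zaz`,
and `a - az` nilpotent. -/
def HasStronglyDrazinInverse {R : Type*} [Ring R] (a : R) : Prop :=
  ∃ z : R, a * z = z * a ∧ z = z * a * z ∧ IsNilpotent (a - a * z)

/-! All four conditions concern commuting elements, so each implication can be checked in a
commutative subring. There `a` has a Hirano inverse iff `a²` has a strongly Drazin inverse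
(`z ↦ z²` and `w ↦ a * w`), and `b` has a strongly Drazin inverse iff `b - b²` is nilpotent: lift `b`
modulo the nilradical to an idempotent `e` and take `w = e * (1 + (b - e))⁻¹`. For `b = a²` this is
the nilpotency of `a - a³`. For the decomposition, `(a² + a) / 2` and `(a² - a) / 2` are idempotent
modulo nilpotents; lifting them to idempotents `P`, `Q` gives the tripotent `P - Q`. -/

section CommRing

variable {R : Type*} [CommRing R]

theorem exists_isIdempotentElem_isNilpotent_sub {b : R} (h : IsNilpotent (b - b ^ 2)) :
    ∃ e, IsIdempotentElem e ∧ IsNilpotent (b - e) := by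
  let f := Ideal.Quotient.mk (nilradical R)
  have hf : ∀ x ∈ RingHom.ker f, IsNilpotent x := by
    simp [f, Ideal.mk_ker, mem_nilradical]
  have hfb : IsIdempotentElem (f b) := by
    rw [IsIdempotentElem, ← map_mul, eq_comm, ← sub_eq_zero, ← map_sub, ← sq,
      Ideal.Quotient.eq_zero_iff_mem, mem_nilradical]
    exact h
  obtain ⟨e, he, hfe⟩ := exists_isIdempotentElem_eq_of_ker_isNilpotent f hf _ ⟨b, rfl⟩ hfb
  exact ⟨e, he, mem_nilradical.mp (Ideal.Quotient.eq.mp hfe.symm)⟩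

theorem IsIdempotentElem.exists_mul_eq_of_isNilpotent_sub {b e : R} (he : IsIdempotentElem e)
    (h : IsNilpotent (b - e)) : ∃ w, b * w = e ∧ e * w = w := by
  obtain ⟨u, hu⟩ := h.isUnit_one_add
  refine ⟨e * ↑u⁻¹, ?_, by rw [← mul_assoc, he.eq]⟩
  calc b * (e * ↑u⁻¹) = e * (1 + (b - e)) * ↑u⁻¹ := by linear_combination (↑u⁻¹ : R) * he.eq
    _ = e := by rw [← hu, mul_assoc, u.mul_inv, mul_one]

theorem hasStronglyDrazinInverse_of_isNilpotent_sub_sq {b : R} (h : IsNilpotent (b - b ^ 2)) :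
    HasStronglyDrazinInverse b := by
  obtain ⟨e, he, hbe⟩ := exists_isIdempotentElem_isNilpotent_sub h
  obtain ⟨w, hbw, hew⟩ := he.exists_mul_eq_of_isNilpotent_sub hbe
  refine ⟨w, mul_comm b w, ?_, by rwa [hbw]⟩
  rw [mul_comm w b, hbw, hew]

theorem HasStronglyDrazinInverse.hasHiranoInverse_of_sq {a : R}
    (h : HasStronglyDrazinInverse (a ^ 2)) : HasHiranoInverse a := by
  obtain ⟨w, -, hw, hn⟩ := h
  refine ⟨a * w, mul_comm .., by linear_combination a * hw, ?_⟩
  rwa [← mul_assoc, ← sq]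

theorem exists_tripotent_add_isNilpotent (h2 : IsUnit (2 : R)) {a : R}
    (h : IsNilpotent (a - a ^ 3)) : ∃ e n : R, e ^ 3 = e ∧ IsNilpotent n ∧ a = e + n := by
  have := h2.invertible
  have hp : IsNilpotent (⅟2 * (a ^ 2 + a) - (⅟2 * (a ^ 2 + a)) ^ 2) := by
    rw [show ⅟2 * (a ^ 2 + a) - (⅟2 * (a ^ 2 + a)) ^ 2 = ⅟2 * ⅟2 * (a + 2) * (a - a ^ 3) by
      linear_combination (-(⅟2 * (a ^ 2 + a))) * invOf_mul_self (2 : R)]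
    exact (Commute.all _ _).isNilpotent_mul_left h
  have hq : IsNilpotent (⅟2 * (a ^ 2 - a) - (⅟2 * (a ^ 2 - a)) ^ 2) := by
    rw [show ⅟2 * (a ^ 2 - a) - (⅟2 * (a ^ 2 - a)) ^ 2 = ⅟2 * ⅟2 * (a - 2) * (a - a ^ 3) by
      linear_combination (-(⅟2 * (a ^ 2 - a))) * invOf_mul_self (2 : R)]
    exact (Commute.all _ _).isNilpotent_mul_left h
  obtain ⟨P, hP, hpP⟩ := exists_isIdempotentElem_isNilpotent_sub hp
  obtain ⟨Q, hQ, hqQ⟩ := exists_isIdempotentElem_isNilpotent_sub hq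
  refine ⟨P - Q, a - (P - Q), ?_, ?_, by ring⟩
  · linear_combination (P + 1 - 3 * Q) * hP.eq + (3 * P - Q - 1) * hQ.eq
  · rw [show a - (P - Q) = (⅟2 * (a ^ 2 + a) - P) - (⅟2 * (a ^ 2 - a) - Q) by
      linear_combination (-a) * invOf_mul_self (2 : R)]
    exact (Commute.all _ _).isNilpotent_sub hpP hqQ

end CommRing

section Ring

open scoped IsMulCommutative

variable {R S F : Type*} [Ring R] [Ring S] [FunLike F R S] [RingHomClass F R S]

theorem HasStronglyDrazinInverse.map (f : F) {b : R} (h : HasStronglyDrazinInverse b) :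
    HasStronglyDrazinInverse (f b) := by
  obtain ⟨w, hc, hw, hn⟩ := h
  refine ⟨f w, by simp only [← map_mul, hc], by simp only [← map_mul, ← hw], ?_⟩
  simpa only [map_sub, map_mul] using hn.map f

theorem HasHiranoInverse.map (f : F) {a : R} (h : HasHiranoInverse a) :
    HasHiranoInverse (f a) := by
  obtain ⟨z, hc, hz, hn⟩ := h
  refine ⟨f z, by simp only [← map_mul, hc], by simp only [← map_mul, ← hz], ?_⟩
  simpa only [map_sub, map_mul, map_pow] using hn.map f

theorem Commute.exists_isMulCommutative_subring {x y : R} (h : Commute x y) :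
    ∃ (T : Subring R) (_ : IsMulCommutative T) (x' y' : T), (x' : R) = x ∧ (y' : R) = y := by
  refine ⟨Subring.closure {x, y}, Subring.isMulCommutative_closure ?_,
    ⟨x, Subring.subset_closure (by simp)⟩, ⟨y, Subring.subset_closure (by simp)⟩, rfl, rfl⟩
  simp only [Set.mem_insert_iff, Set.mem_singleton_iff]
  rintro a (rfl | rfl) b (rfl | rfl)
  exacts [rfl, h.eq, h.symm.eq, rfl]

@[norm_cast]
theorem Subring.isNilpotent_coe {T : Subring R} {x : T} : IsNilpotent (x : R) ↔ IsNilpotent x :=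
  IsNilpotent.map_iff (f := T.subtype) T.subtype_injective

theorem isNilpotent_sub_pow_three_iff {a : R} :
    IsNilpotent (a - a ^ 3) ↔ IsNilpotent (a ^ 2 - (a ^ 2) ^ 2) := by
  obtain ⟨T, _, a, -, rfl, -⟩ := (Commute.refl a).exists_isMulCommutative_subring
  norm_cast
  constructor
  · intro h
    rw [show a ^ 2 - (a ^ 2) ^ 2 = a * (a - a ^ 3) by ring]
    exact (Commute.all _ _).isNilpotent_mul_left h
  · intro h
    refine IsNilpotent.of_pow (m := 2) ?_
    rw [show (a - a ^ 3) ^ 2 = (a ^ 2 - (a ^ 2) ^ 2) * (1 - a ^ 2) by ring]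
    exact (Commute.all _ _).isNilpotent_mul_right h

theorem HasHiranoInverse.hasStronglyDrazinInverse_sq {a : R} (h : HasHiranoInverse a) :
    HasStronglyDrazinInverse (a ^ 2) := by
  obtain ⟨z, hc, hz, hn⟩ := h
  obtain ⟨T, _, a, z, rfl, rfl⟩ := Commute.exists_isMulCommutative_subring hc
  norm_cast at hz hn
  have : HasStronglyDrazinInverse (a ^ 2) := by
    refine ⟨z ^ 2, mul_comm .., by linear_combination (z + z * a * z) * hz, ?_⟩
    rwa [show a ^ 2 - a ^ 2 * z ^ 2 = a ^ 2 - a * z by linear_combination a * hz]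
  simpa using this.map T.subtype

theorem HasStronglyDrazinInverse.isNilpotent_sub_sq {b : R} (h : HasStronglyDrazinInverse b) :
    IsNilpotent (b - b ^ 2) := by
  obtain ⟨w, hc, hw, hn⟩ := h
  obtain ⟨T, _, b, w, rfl, rfl⟩ := Commute.exists_isMulCommutative_subring hc
  norm_cast at hw hn ⊢
  rw [show b - b ^ 2 = (b - b * w) * (1 - b * w - b) by linear_combination b * hw]
  exact (Commute.all _ _).isNilpotent_mul_right hn

theorem hasHiranoInverse_of_isNilpotent_sub_pow_three {a : R} (h : IsNilpotent (a - a ^ 3)) :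
    HasHiranoInverse a := by
  obtain ⟨T, _, a, -, rfl, -⟩ := (Commute.refl a).exists_isMulCommutative_subring
  norm_cast at h
  have := (hasStronglyDrazinInverse_of_isNilpotent_sub_sq
    (isNilpotent_sub_pow_three_iff.mp h)).hasHiranoInverse_of_sq
  exact this.map T.subtype

theorem Commute.isNilpotent_add_sub_add_pow_three {e n : R} (hc : Commute e n) (he : e ^ 3 = e)
    (hn : IsNilpotent n) : IsNilpotent ((e + n) - (e + n) ^ 3) := by
  obtain ⟨T, _, e, n, rfl, rfl⟩ := hc.exists_isMulCommutative_subring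
  norm_cast at he hn ⊢
  rw [show e + n - (e + n) ^ 3 = n * (1 - 3 * e ^ 2 - 3 * e * n - n ^ 2) by
    linear_combination (-1 : T) * he]
  exact (Commute.all _ _).isNilpotent_mul_right hn

theorem exists_commuting_tripotent_add_isNilpotent (h2 : IsUnit (2 : R)) {a : R}
    (h : IsNilpotent (a - a ^ 3)) :
    ∃ e n : R, e ^ 3 = e ∧ IsNilpotent n ∧ e * n = n * e ∧ a = e + n := by
  obtain ⟨u, hu⟩ := h2
  have hac : Commute a ↑u⁻¹ := (hu ▸ Commute.ofNat_right a 2).units_inv_right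
  obtain ⟨T, _, a, c, rfl, hc⟩ := hac.exists_isMulCommutative_subring
  norm_cast at h
  have h2 : IsUnit (2 : T) := IsUnit.of_mul_eq_one c <| by
    ext
    rw [Subring.coe_mul, hc, show ((2 : T) : R) = 2 from map_ofNat T.subtype 2, ← hu, u.mul_inv,
      Subring.coe_one]
  obtain ⟨e, n, he, hn, rfl⟩ := exists_tripotent_add_isNilpotent h2 h
  refine ⟨e, n, by exact_mod_cast congrArg Subtype.val he, by exact_mod_cast hn,
    by exact_mod_cast congrArg Subtype.val (mul_comm e n), by push_cast; rfl⟩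

end Ring

variable {X : Type*} [NormedAddCommGroup X] [NormedSpace ℂ X] [CompleteSpace X]

theorem hirano_tfae (A : X →L[ℂ] X) :
    List.TFAE [
      (∃ Z : X →L[ℂ] X, A * Z = Z * A ∧ Z = Z * A * Z ∧ IsNilpotent (A ^ 2 - A * Z)),
      IsNilpotent (A - A ^ 3),
      (∃ E N : X →L[ℂ] X, E ^ 3 = E ∧ IsNilpotent N ∧ E * N = N * E ∧ A = E + N),
      (∃ W : X →L[ℂ] X, A ^ 2 * W = W * A ^ 2 ∧ W = W * A ^ 2 * W ∧
        IsNilpotent (A ^ 2 - A ^ 2 * W))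
    ] := by
  tfae_have 1 → 4 := HasHiranoInverse.hasStronglyDrazinInverse_sq
  tfae_have 4 → 2 := fun h =>
    isNilpotent_sub_pow_three_iff.mpr (HasStronglyDrazinInverse.isNilpotent_sub_sq h)
  tfae_have 2 → 1 := hasHiranoInverse_of_isNilpotent_sub_pow_three
  have h2 : IsUnit (2 : X →L[ℂ] X) := by
    simpa only [map_ofNat] using (IsUnit.mk0 (2 : ℂ) two_ne_zero).map (algebraMap ℂ (X →L[ℂ] X))
  tfae_have 2 → 3 := exists_commuting_tripotent_add_isNilpotent h2
  tfae_have 3 → 2 := by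
    rintro ⟨E, N, hE, hN, hc, rfl⟩
    exact Commute.isNilpotent_add_sub_add_pow_three hc hE hN
  tfae_finish
end

section
/- Let X be a complex Banach space and L(X) the Banach algebra of bounded linear operators on X. Suppose A, B ∈ L(X) have strongly Drazin inverses and A^D B A^D = 0, where A^D is the Drazin inverse of A. Then the 2×2 operator matrix [[A·A^e, B], [A^e, 0]], where A^e = A·A^D, has a strongly Drazin inverse in M₂(L(X)). -/
/-!
An element `a` of a ring has a strongly Drazin inverse as soon as `a - a²` is nilpotent: Newton's
method for `X² - X` in the commutative subring `ℤ[a]` gives an idempotent `p` commuting with `a`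
with `a - p` nilpotent, and then `p (1 + a - p)⁻¹` is the inverse.

So it suffices to show that `T = M - M²` is nilpotent for `M = [[a e, b], [e, 0]]` whenever `e` is
an idempotent commuting with `a`, `a - e` is nilpotent and `e b e = 0` (here `e = A A^D`).
With `F = diag(e, 0)` one checks `T² (1 - F) T = 0`, so `T^(k+2) = T² (F T)^k`, and `F T` is
nilpotent together with `F T F = diag(-a e (a - e), 0)`.
-/

section NilClean

open Polynomial

variable {R : Type*} [Ring R]

theorem isNilpotent_mul_comm {x y : R} : IsNilpotent (x * y) ↔ IsNilpotent (y * x) := by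
  suffices ∀ x y : R, IsNilpotent (y * x) → IsNilpotent (x * y) from ⟨this y x, this x y⟩
  rintro x y ⟨k, hk⟩
  exact ⟨k + 1, by rw [pow_succ', mul_assoc, ← mul_pow_mul, hk, zero_mul, mul_zero]⟩

theorem isNilpotent_of_sq_mul_eq_sq_mul {T S : R} (hS : IsNilpotent S)
    (h : T ^ 2 * T = T ^ 2 * S) : IsNilpotent T := by
  have hpow : ∀ k, T ^ (k + 2) = T ^ 2 * S ^ k := by
    intro k
    induction k with
    | zero => simp
    | succ k ih =>
      rw [pow_succ', ih, ← mul_assoc, ← pow_succ', pow_succ, h, mul_assoc, ← pow_succ']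
  obtain ⟨k, hk⟩ := hS
  exact ⟨k + 2, by rw [hpow, hk, mul_zero]⟩

theorem isNilpotent_of_sq_mul_one_sub_mul_eq_zero {T F : R} (hF : IsIdempotentElem F)
    (h : T ^ 2 * (1 - F) * T = 0) (hFTF : IsNilpotent (F * T * F)) : IsNilpotent T := by
  refine isNilpotent_of_sq_mul_eq_sq_mul (S := F * T) ?_ ?_
  · rwa [← hF.eq, mul_assoc, isNilpotent_mul_comm]
  · rwa [mul_sub, mul_one, sub_mul, sub_eq_zero, mul_assoc] at h

theorem exists_isIdempotentElem_commute_isNilpotent_sub {a : R} (h : IsNilpotent (a - a * a)) :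
    ∃ p, IsIdempotentElem p ∧ Commute a p ∧ IsNilpotent (a - p) := by
  let S := Algebra.adjoin ℤ {a}
  let x : S := ⟨a, Algebra.self_mem_adjoin_singleton ℤ a⟩
  have hsq : IsNilpotent (x - x * x) := by
    obtain ⟨k, hk⟩ := h
    exact ⟨k, Subtype.ext hk⟩
  have hP : IsNilpotent (aeval x (X * X - X : ℤ[X])) := by simpa using hsq.neg
  have hP' : IsUnit (aeval x (derivative (X * X - X : ℤ[X]))) := by
    have hsq4 : IsNilpotent (-4 * (x - x * x)) := (Commute.all _ _).isNilpotent_mul_left hsq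
    rw [← isUnit_pow_iff two_ne_zero, show aeval x (derivative (X * X - X : ℤ[X])) ^ 2
      = 1 + -4 * (x - x * x) by simp; ring]
    exact hsq4.isUnit_one_add
  obtain ⟨r, hr, hPr⟩ := (existsUnique_nilpotent_sub_and_aeval_eq_zero hP hP').exists
  refine ⟨r, ?_, congrArg Subtype.val (mul_comm x r), hr.map S.val⟩
  rw [map_sub, map_mul, aeval_X, sub_eq_zero] at hPr
  exact congrArg Subtype.val hPr

theorem hasStronglyDrazinInverse_of_isIdempotentElem {a p : R} (hp : IsIdempotentElem p)
    (hap : Commute a p) (hn : IsNilpotent (a - p)) : HasStronglyDrazinInverse a := by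
  obtain ⟨u, hu⟩ := hn.isUnit_one_add
  have hau : Commute a u := hu ▸ (Commute.one_right a).add_right ((Commute.refl a).sub_right hap)
  have hpu : p * u = a * p := by
    rw [hu, mul_add, mul_one, mul_sub, hp.eq, ← hap.eq, add_sub_cancel]
  have hz : a * (p * ↑u⁻¹) = p := by
    rw [← mul_assoc, ← hpu, mul_assoc, Units.mul_inv, mul_one]
  have hz' : p * ↑u⁻¹ * a = p := by
    rw [mul_assoc, ← hau.units_inv_right.eq, ← mul_assoc, ← hap.eq, mul_assoc, hz]
  refine ⟨p * ↑u⁻¹, hz.trans hz'.symm, ?_, ?_⟩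
  · rw [hz', ← mul_assoc, hp.eq]
  · rwa [hz]

theorem hasStronglyDrazinInverse_of_isNilpotent_sub_mul_self {a : R}
    (h : IsNilpotent (a - a * a)) : HasStronglyDrazinInverse a :=
  let ⟨_, hp, hap, hn⟩ := exists_isIdempotentElem_commute_isNilpotent_sub h
  hasStronglyDrazinInverse_of_isIdempotentElem hp hap hn

end NilClean

section Corner

open Matrix

variable {R : Type*} [Ring R]

theorem Matrix.isNilpotent_fin_two_of_isNilpotent {w : R} (hw : IsNilpotent w) :
    IsNilpotent (!![w, 0; 0, 0] : Matrix (Fin 2) (Fin 2) R) := by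
  obtain ⟨k, hk⟩ := hw
  refine ⟨k + 1, ?_⟩
  rw [show !![w, 0; 0, 0] = diagonal ![w, 0] from (diagonal_fin_two ![w, 0]).symm, diagonal_pow]
  ext i j
  fin_cases i <;> fin_cases j <;> simp [pow_succ, hk]

variable {a b e : R}

theorem corner_sub_mul_self_eq (he : IsIdempotentElem e) (hae : Commute a e) :
    !![a * e, b; e, 0] - !![a * e, b; e, 0] * !![a * e, b; e, 0] =
      !![a * e - (a * (a * e) + b * e), b - a * (e * b); e - a * e, -(e * b)] := by
  ext i j
  fin_cases i <;> fin_cases j <;> simp [mul_assoc, hae.symm.left_comm, he.eq]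

theorem isNilpotent_corner_sub_mul_self (he : IsIdempotentElem e) (hae : Commute a e)
    (hebe : e * b * e = 0) (hn : IsNilpotent (a - e)) :
    IsNilpotent ((!![a * e, b; e, 0] : Matrix (Fin 2) (Fin 2) R)
      - !![a * e, b; e, 0] * !![a * e, b; e, 0]) := by
  have heb : e * (b * e) = 0 := by rw [← mul_assoc, hebe]
  have hT := corner_sub_mul_self_eq (b := b) he hae
  set T : Matrix (Fin 2) (Fin 2) R :=
    !![a * e, b; e, 0] - !![a * e, b; e, 0] * !![a * e, b; e, 0]
  set F : Matrix (Fin 2) (Fin 2) R := !![e, 0; 0, 0]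
  set E₁ : Matrix (Fin 2) (Fin 2) R := !![1 - e, 0; 0, 0]
  set E₂ : Matrix (Fin 2) (Fin 2) R := !![0, 0; 0, e]
  set G : Matrix (Fin 2) (Fin 2) R := !![0, 0; 0, 1 - e]
  have hTE₁ : T * E₁ = 0 := by
    rw [hT]; ext i j
    fin_cases i <;> fin_cases j <;> simp [E₁, add_mul, mul_sub, sub_mul, mul_assoc, he.eq]
  have hGT : G * T = 0 := by
    rw [hT]; ext i j
    fin_cases i <;> fin_cases j <;>
      simp [G, mul_sub, sub_mul, he.mul_self_mul, hae.symm.left_comm, he.eq]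
  have hTTE₂ : T * (T * E₂) = 0 := by
    rw [hT]; ext i j
    fin_cases i <;> fin_cases j <;> simp [E₂, add_mul, sub_mul, mul_assoc, heb]
  have hFTF : F * T * F = !![-(a * e * (a - e)), 0; 0, 0] := by
    rw [hT]; ext i j
    fin_cases i <;> fin_cases j <;>
      simp [F, mul_add, mul_sub, sub_mul, mul_assoc, he.mul_self_mul, hae.symm.left_comm, heb,
        he.eq, ← hae.eq]
  have hsplit : 1 - F = E₁ + E₂ + G := by
    ext i j
    fin_cases i <;> fin_cases j <;> simp [F, E₁, E₂, G, one_fin_two]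
  have hF : IsIdempotentElem F := by
    ext i j
    fin_cases i <;> fin_cases j <;> simp [F, he.eq]
  refine isNilpotent_of_sq_mul_one_sub_mul_eq_zero hF ?_ ?_
  · calc T ^ 2 * (1 - F) * T = T * (T * E₁) * T + T * (T * E₂) * T + T ^ 2 * (G * T) := by
          rw [hsplit]; noncomm_ring
      _ = 0 := by rw [hTE₁, hGT, hTTE₂]; simp
  · have hcomm : Commute (a * e) (a - e) :=
      ((Commute.refl a).sub_right hae).mul_left (hae.symm.sub_right (Commute.refl e))
    rw [hFTF]
    exact isNilpotent_fin_two_of_isNilpotent (hcomm.isNilpotent_mul_left hn).neg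

theorem hasStronglyDrazinInverse_corner (he : IsIdempotentElem e) (hae : Commute a e)
    (hebe : e * b * e = 0) (hn : IsNilpotent (a - e)) :
    HasStronglyDrazinInverse (!![a * e, b; e, 0] : Matrix (Fin 2) (Fin 2) R) :=
  hasStronglyDrazinInverse_of_isNilpotent_sub_mul_self
    (isNilpotent_corner_sub_mul_self he hae hebe hn)

end Corner

variable {X : Type*} [NormedAddCommGroup X] [NormedSpace ℂ X] [CompleteSpace X]

theorem sdrazin_corner_general (A B AD : X →L[ℂ] X)
    (hAD : A * AD = AD * A ∧ AD = AD * A * AD ∧ IsNilpotent (A - A * AD))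
    (h : AD * B * AD = 0) :
    HasStronglyDrazinInverse
      (!![A * (A * AD), B; A * AD, 0] : Matrix (Fin 2) (Fin 2) (X →L[ℂ] X)) := by
  obtain ⟨hcomm, hinv, hnil⟩ := hAD
  have he : IsIdempotentElem (A * AD) := by
    rw [IsIdempotentElem, mul_assoc, ← mul_assoc AD, ← hinv]
  have hae : Commute A (A * AD) := by
    rw [Commute, SemiconjBy, mul_assoc, hcomm]
  have hebe : A * AD * B * (A * AD) = 0 := by
    calc A * AD * B * (A * AD) = A * AD * B * (AD * A) := by rw [← hcomm]
      _ = A * (AD * B * AD) * A := by noncomm_ring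
      _ = 0 := by rw [h, mul_zero, zero_mul]
  exact hasStronglyDrazinInverse_corner he hae hebe hnil

theorem sdrazin_corner (A B AD : X →L[ℂ] X)
    (hAD : A * AD = AD * A ∧ AD = AD * A * AD ∧ IsNilpotent (A - A * AD))
    (hB : HasStronglyDrazinInverse B)
    (h : AD * B * AD = 0) :
    HasStronglyDrazinInverse
      (!![A * (A * AD), B; A * AD, 0] : Matrix (Fin 2) (Fin 2) (X →L[ℂ] X)) :=
  sdrazin_corner_general A B AD hAD h
end

section
/- Let X be a complex Banach space and L(X) the Banach algebra of bounded linear operators on X. Let A ∈ L(X) be nilpotent and let B ∈ L(X) have a Hirano inverse B^H. If A B^H = 0 and B^π A B = 0, where B^π = I − B·B^H, then A + B has a Hirano inverse. -/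
open Polynomial in
theorem exists_isIdempotentElem_isNilpotent_sub_of_isNilpotent_sub_sq {S : Type*} [CommRing S]
    {t : S} (h : IsNilpotent (t - t ^ 2)) : ∃ e : S, IsIdempotentElem e ∧ IsNilpotent (t - e) := by
  have hP : IsNilpotent (aeval t (X ^ 2 - X : ℤ[X])) := by
    rw [map_sub, map_pow, aeval_X, ← neg_sub]
    exact h.neg
  have hP' : IsUnit (aeval t (derivative (X ^ 2 - X : ℤ[X]))) := by
    have hsq : (2 * t - 1) ^ 2 = 1 + -4 * (t - t ^ 2) := by ring
    have hu := ((Commute.all (-4) _).isNilpotent_mul_left h).isUnit_one_add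
    rw [← hsq, isUnit_pow_iff two_ne_zero] at hu
    simpa [map_ofNat] using hu
  obtain ⟨e, ⟨hte, he⟩, -⟩ := existsUnique_nilpotent_sub_and_aeval_eq_zero hP hP'
  refine ⟨e, ?_, hte⟩
  simpa [sub_eq_zero, sq, IsIdempotentElem] using he

open scoped IsMulCommutative in
theorem exists_isIdempotentElem_isNilpotent_sub_commute_of_isNilpotent_sub_sq {R : Type*}
    [Ring R] {t : R} (h : IsNilpotent (t - t ^ 2)) :
    ∃ e : R, IsIdempotentElem e ∧ IsNilpotent (t - e) ∧ ∀ x : R, Commute x t → Commute x e := by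
  let t' : Algebra.adjoin ℤ {t} := ⟨t, Algebra.self_mem_adjoin_singleton ℤ t⟩
  obtain ⟨e, he, hte⟩ := exists_isIdempotentElem_isNilpotent_sub_of_isNilpotent_sub_sq (t := t')
    (by obtain ⟨n, hn⟩ := h; exact ⟨n, Subtype.ext (by simpa [t'] using hn)⟩)
  refine ⟨e, congrArg Subtype.val he, hte.map (Algebra.adjoin ℤ {t}).val, fun x hx => ?_⟩
  refine (Algebra.adjoin_le_centralizer_centralizer ℤ {t} e.2 x ?_ : x * e = e * x)
  simpa [Set.mem_centralizer_iff] using hx.eq.symm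

theorem IsIdempotentElem.isNilpotent_sub_sq_of_isNilpotent_sub {R : Type*} [Ring R] {e t : R}
    (he : IsIdempotentElem e) (hte : Commute t e) (h : IsNilpotent (t - e)) :
    IsNilpotent (t - t ^ 2) := by
  have hfactor : t - t ^ 2 = (t - e) * (1 - t - e) := by
    calc t - t ^ 2 = (t - e) * (1 - t - e) + (t * e - e * t) + (e - e * e) := by noncomm_ring
      _ = (t - e) * (1 - t - e) := by rw [hte.eq, he.eq, sub_self, sub_self, add_zero, add_zero]
  rw [hfactor]
  have hdt : Commute (t - e) t := (Commute.refl t).sub_left hte.symm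
  have hde : Commute (t - e) e := hte.sub_left (Commute.refl e)
  exact (((Commute.one_right _).sub_right hdt).sub_right hde).isNilpotent_mul_right h

theorem hasHiranoInverse_iff_isNilpotent_sq_sub_pow_four {R : Type*} [Ring R] {a : R} :
    HasHiranoInverse a ↔ IsNilpotent (a ^ 2 - a ^ 4) := by
  rw [show a ^ 4 = (a ^ 2) ^ 2 by rw [← pow_mul]]
  constructor
  · rintro ⟨z, hcomm, hzaz, hnil⟩
    have he : IsIdempotentElem (a * z) := by
      rw [IsIdempotentElem, mul_assoc, ← mul_assoc z, ← hzaz]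
    have hae : Commute a (a * z) := (Commute.refl a).mul_right hcomm
    exact he.isNilpotent_sub_sq_of_isNilpotent_sub (hae.pow_left 2) hnil
  · intro h
    obtain ⟨e, he, hne, hcomm⟩ :=
      exists_isIdempotentElem_isNilpotent_sub_commute_of_isNilpotent_sub_sq h
    have hae : Commute a e := hcomm a ((Commute.refl a).pow_right 2)
    obtain ⟨u, hu⟩ := hne.isUnit_one_add
    have hau : Commute a u := hu ▸ (Commute.one_right a).add_right
      (((Commute.refl a).pow_right 2).sub_right hae)
    have heu : Commute e u := hu ▸ (Commute.one_right e).add_right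
      ((hcomm _ (Commute.refl _)).symm.sub_right (Commute.refl e))
    -- on the range of `e`, `a ^ 2` acts as the unit `u`
    have hsq : a ^ 2 * e = e * u := by
      rw [heu.eq, hu, add_mul, sub_mul, he.eq, one_mul, add_sub_cancel]
    set z := a * e * ↑u⁻¹
    have haz : a * z = e := by
      rw [← mul_assoc, ← mul_assoc, ← sq, hsq, mul_assoc, u.mul_inv, mul_one]
    have hez : e * z = z := by
      rw [← mul_assoc, ← mul_assoc, ← hae.eq, mul_assoc a e e, he.eq]
    have hcz : Commute a z := ((Commute.refl a).mul_right hae).mul_right hau.units_inv_right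
    refine ⟨z, hcz.eq, ?_, by rwa [haz]⟩
    rw [← hcz.eq, haz, hez]

theorem isNilpotent_add_of_mul_eq_zero {R : Type*} [Ring R] {x y : R} (hxy : x * y = 0)
    (hx : IsNilpotent x) (hy : IsNilpotent y) : IsNilpotent (x + y) := by
  obtain ⟨r, hr⟩ := hx
  obtain ⟨s, hs⟩ := hy
  have hx_pow : ∀ k, x * (x + y) ^ k = x ^ (k + 1) := by
    intro k
    induction k with
    | zero => simp
    | succ k ih => rw [pow_succ', ← mul_assoc, mul_add, hxy, add_zero, mul_assoc, ih, ← pow_succ']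
  have hpow : ∀ j, (x + y) ^ (r + j) = y ^ j * (x + y) ^ r := by
    intro j
    induction j with
    | zero => simp
    | succ j ih =>
      rw [← add_assoc, pow_succ', add_mul, hx_pow, pow_eq_zero_of_le (by omega) hr, zero_add, ih,
        ← mul_assoc, ← pow_succ']
  exact ⟨r + s, by rw [hpow, hs, zero_mul]⟩

section Triangular

variable {R : Type*} [Ring R] {p x : R}

theorem pow_succ_mul_eq_mul_pow_succ_of_one_sub_mul_mul_eq_zero (h : (1 - p) * x * p = 0)
    (n : ℕ) : x ^ (n + 1) * p = (x * p) ^ (n + 1) := by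
  have hxp : x * p = p * (x * p) := by
    rwa [sub_mul, one_mul, sub_mul, sub_eq_zero, mul_assoc] at h
  induction n with
  | zero => simp
  | succ n ih => rw [pow_succ, mul_assoc, hxp, ← mul_assoc, ih, ← hxp, ← pow_succ]

theorem one_sub_mul_pow_succ_eq_of_one_sub_mul_mul_eq_zero (h : (1 - p) * x * p = 0)
    (n : ℕ) : (1 - p) * x ^ (n + 1) = ((1 - p) * x) ^ (n + 1) := by
  have hqx : (1 - p) * x = (1 - p) * x * (1 - p) := by
    rw [mul_sub, mul_one, h, sub_zero]
  induction n with
  | zero => simp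
  | succ n ih => rw [pow_succ', ← mul_assoc, hqx, mul_assoc, ih, ← hqx, ← pow_succ']

theorem isNilpotent_of_one_sub_mul_mul_eq_zero (h : (1 - p) * x * p = 0)
    (h₁ : IsNilpotent (x * p)) (h₂ : IsNilpotent ((1 - p) * x)) : IsNilpotent x := by
  obtain ⟨r, hr⟩ := h₁
  obtain ⟨s, hs⟩ := h₂
  have hr' : x ^ (r + 1) * p = 0 := by
    rw [pow_succ_mul_eq_mul_pow_succ_of_one_sub_mul_mul_eq_zero h, pow_succ, hr, zero_mul]
  have hs' : (1 - p) * x ^ (s + 1) = 0 := by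
    rw [one_sub_mul_pow_succ_eq_of_one_sub_mul_mul_eq_zero h, pow_succ, hs, zero_mul]
  refine ⟨(r + 1) + (s + 1), ?_⟩
  calc x ^ (r + 1 + (s + 1)) = x ^ (r + 1) * (p + (1 - p)) * x ^ (s + 1) := by
        rw [add_sub_cancel, mul_one, pow_add]
    _ = x ^ (r + 1) * p * x ^ (s + 1) + x ^ (r + 1) * ((1 - p) * x ^ (s + 1)) := by
        rw [mul_add, add_mul, mul_assoc _ (1 - p)]
    _ = 0 := by rw [hr', hs', zero_mul, mul_zero, add_zero]

theorem isNilpotent_sq_sub_pow_four_of_one_sub_mul_mul_eq_zero (h : (1 - p) * x * p = 0)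
    (h₁ : IsNilpotent ((x * p) ^ 2 - (x * p) ^ 4)) (h₂ : IsNilpotent ((1 - p) * x)) :
    IsNilpotent (x ^ 2 - x ^ 4) := by
  have hleft (n : ℕ) : (1 - p) * x ^ (n + 1) * p = 0 := by
    rw [one_sub_mul_pow_succ_eq_of_one_sub_mul_mul_eq_zero h, pow_succ, mul_assoc, h, mul_zero]
  have hright (n : ℕ) := pow_succ_mul_eq_mul_pow_succ_of_one_sub_mul_mul_eq_zero h n
  have hcorner (n : ℕ) := one_sub_mul_pow_succ_eq_of_one_sub_mul_mul_eq_zero h n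
  refine isNilpotent_of_one_sub_mul_mul_eq_zero (p := p) ?_ ?_ ?_
  · rw [mul_sub, sub_mul, hleft 1, hleft 3, sub_zero]
  · rwa [sub_mul, hright 1, hright 3]
  · set y := (1 - p) * x
    rw [mul_sub, hcorner 1, hcorner 3, show y ^ 4 = y ^ 2 * y ^ 2 by rw [← pow_add], ← mul_one_sub]
    exact ((Commute.one_right _).sub_right (Commute.refl _)).isNilpotent_mul_right
      (h₂.pow_of_pos two_ne_zero)

end Triangular

theorem isNilpotent_sq_sub_pow_four_add {R : Type*} [Ring R] {a b p : R}
    (hp : IsIdempotentElem p) (hpb : Commute p b) (hap : a * p = 0) (hpab : (1 - p) * a * b = 0)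
    (ha : IsNilpotent a) (hb : IsNilpotent (b ^ 2 - b ^ 4)) (hqb : IsNilpotent ((1 - p) * b)) :
    IsNilpotent ((a + b) ^ 2 - (a + b) ^ 4) := by
  have hbp : (a + b) * p = b * p := by rw [add_mul, hap, zero_add]
  refine isNilpotent_sq_sub_pow_four_of_one_sub_mul_mul_eq_zero (p := p) ?_ ?_ ?_
  · rw [mul_assoc, hbp, ← hpb.eq, ← mul_assoc, hp.one_sub_mul_self, zero_mul]
  · have hpow (n : ℕ) : (b * p) ^ (n + 1) = b ^ (n + 1) * p := by
      rw [hpb.symm.mul_pow, hp.pow_succ_eq]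
    rw [hbp, hpow 1, hpow 3, ← sub_mul]
    exact (((hpb.pow_right 2).sub_right (hpb.pow_right 4)).symm).isNilpotent_mul_right hb
  · have hpa : IsNilpotent ((1 - p) * a) := by
      obtain ⟨n, hn⟩ := ha
      refine ⟨n + 1, ?_⟩
      rw [← one_sub_mul_pow_succ_eq_of_one_sub_mul_mul_eq_zero (by rw [mul_assoc, hap, mul_zero]),
        pow_succ, hn, zero_mul, mul_zero]
    refine mul_add (1 - p) a b ▸ isNilpotent_add_of_mul_eq_zero ?_ hpa hqb
    rw [mul_assoc, ← mul_assoc a, mul_sub, mul_one, hap, sub_zero, ← mul_assoc, hpab]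

theorem hasHiranoInverse_add_of_isNilpotent {R : Type*} [Ring R] {a b b' : R}
    (ha : IsNilpotent a)
    (hb : b * b' = b' * b ∧ b' = b' * b * b' ∧ IsNilpotent (b ^ 2 - b * b'))
    (hab' : a * b' = 0) (hbab : (1 - b * b') * a * b = 0) :
    HasHiranoInverse (a + b) := by
  have hb4 := hasHiranoInverse_iff_isNilpotent_sq_sub_pow_four.mp ⟨b', hb⟩
  obtain ⟨hcomm, hb', hnil⟩ := hb
  set p := b * b'
  have hp : IsIdempotentElem p := by
    rw [IsIdempotentElem, mul_assoc, ← mul_assoc b', ← hb']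
  have hpb : Commute p b := by
    rw [Commute, SemiconjBy, mul_assoc, ← hcomm]
  have hap : a * p = 0 := by rw [hcomm, ← mul_assoc, hab', zero_mul]
  have hqb : IsNilpotent ((1 - p) * b) := by
    refine IsNilpotent.of_pow (m := 2) ?_
    have hsq : ((1 - p) * b) ^ 2 = (1 - p) * (b ^ 2 - p) := by
      rw [((Commute.one_left b).sub_left hpb).mul_pow, hp.one_sub.pow_succ_eq, mul_sub,
        hp.one_sub_mul_self, sub_zero]
    rw [hsq]
    exact (((Commute.one_left _).sub_left (hpb.pow_right 2)).sub_right
      ((Commute.one_left p).sub_left (Commute.refl p))).isNilpotent_mul_left hnil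
  exact hasHiranoInverse_iff_isNilpotent_sq_sub_pow_four.mpr
    (isNilpotent_sq_sub_pow_four_add hp hpb hap hbab ha hb4 hqb)

variable {X : Type*} [NormedAddCommGroup X] [NormedSpace ℂ X] [CompleteSpace X]

theorem hirano_add_nilpotent (A B BH : X →L[ℂ] X)
    (hA : IsNilpotent A)
    (hBH : B * BH = BH * B ∧ BH = BH * B * BH ∧ IsNilpotent (B ^ 2 - B * BH))
    (h1 : A * BH = 0)
    (h2 : (1 - B * BH) * A * B = 0) :
    HasHiranoInverse (A + B) :=
  hasHiranoInverse_add_of_isNilpotent hA hBH h1 h2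
end
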